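/- Let n be even, q = 2^k with k ≥ 2, and f = a_0 + 2a_1 + ... + 2^{k−1}a_{k−1} : V_n → Z_q be gbent. Then for every c ∈ F_2^{k−1} and for any two pairs of vertices (u,v), (x,y), one has |N_{X_c^1}(u,v)| = |N_{X_c^1}(x,y)|, where X_c^1 = { ι(c̃) + ι(d) : c̃ ⪯ (c,1), wt(c̃) odd, d ⪯ c̄ } and N_S(u,v) = {w : f(u⊕w) ∈ S, f(v⊕w) ∈ S}. -/

import Mathlib

open Finset BigOperators

noncomputable def zeta (q : ℕ) : ℂ := Complex.exp (2 * Real.pi * Complex.I / q)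

def dotp {n : ℕ} (u x : Fin n → ZMod 2) : ZMod 2 := ∑ i, u i * x i

noncomputable def chr {n : ℕ} (u x : Fin n → ZMod 2) : ℂ := (-1 : ℂ) ^ (dotp u x).val

noncomputable def WHT {n q : ℕ} (f : (Fin n → ZMod 2) → ZMod q) (u : Fin n → ZMod 2) : ℂ :=
  ∑ x, zeta q ^ (f x).val * chr u x

noncomputable def Amat {n q : ℕ} (f : (Fin n → ZMod 2) → ZMod q) :
    Matrix (Fin n → ZMod 2) (Fin n → ZMod 2) ℂ :=
  fun u v => zeta q ^ (f (u + v)).val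

/-- The set `X_c^1 = { ι(c̃) + ι(d) : c̃ ⪯ (c,1), wt(c̃) odd, d ⪯ c̄ } ⊆ Z_{2^k}`. -/
def Xc1 (k : ℕ) (c : Fin k → ZMod 2) : Set (ZMod (2 ^ k)) :=
  { t | ∃ ct dd : Fin k → ZMod 2,
      (∀ i, (ct i).val ≤ (c i).val) ∧
      (∀ i : Fin k, ((i : ℕ) < k - 1 → (dd i).val ≤ 1 - (c i).val) ∧
                    ((i : ℕ) = k - 1 → (dd i).val = 0)) ∧
      Odd (∑ i, (ct i).val) ∧
      t = (((∑ i, (ct i).val * 2 ^ (i : ℕ)) + ∑ i, (dd i).val * 2 ^ (i : ℕ) : ℕ) :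
            ZMod (2 ^ k)) }

/-!
Let `ζ` be a primitive `2^k`-th root of unity and `m = 2^(k-1)`, so `ζ^m = -1`. Grouping the
terms of `H_f(u)` by the low digits `a_0(x), …, a_{k-2}(x)` writes `H_f(u) = ∑_{t<m} b_t ζ^t`
with integers `b_t`, while the Walsh transform of `f_c` at `u` is a signed sum `∑_t ±b_t`.

In `ℤ[ζ]` the element `ζ - 1` is prime (`ℤ[ζ]/(ζ - 1) = 𝔽₂`), `2` is associated to `(ζ - 1)^m`
(evaluate the cyclotomic polynomial at `1`), and complex conjugation maps `ζ - 1` to an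
associate. Hence `H_f(u) · conj H_f(u) = 2^n` forces `H_f(u) = 2^(n/2) β` with `β · conj β = 1`.
Comparing constant coefficients in `β · conj β` gives `∑ b'_t² = 1` for the coordinates of `β`,
so exactly one `b_t` is nonzero and it is `±2^(n/2)`: every `f_c` is bent.

For a bent Boolean function `g` the autocorrelation `∑_w (-1)^(g w + g (w + s))` vanishes for
`s ≠ 0`, which makes `#{w | g (u + w) = 1 ∧ g (v + w) = 1}` the same for all `u ≠ v`. Finally
`f x ∈ X_c^1` exactly when `f_c x = 1`, because the splitting `ι(c̃) + ι(d)` of the digits of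
`f x` is forced to be `c̃ = c ∧ a(x)`, `d = c̄ ∧ a(x)`.
-/

open ComplexConjugate Polynomial

def sgn (z : ZMod 2) : ℤ := (-1) ^ z.val

lemma sgn_add (x y : ZMod 2) : sgn (x + y) = sgn x * sgn y := by
  fin_cases x <;> fin_cases y <;> rfl

lemma sgn_one : sgn 1 = -1 := rfl

lemma sgn_sq (x : ZMod 2) : sgn x ^ 2 = 1 := by
  fin_cases x <;> rfl

lemma one_sub_sgn_mul_one_sub_sgn (x y : ZMod 2) :
    (1 - sgn x) * (1 - sgn y) = 4 * if x = 1 ∧ y = 1 then 1 else 0 := by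
  fin_cases x <;> fin_cases y <;> rfl

section Walsh

variable {n : ℕ}

lemma dotp_add_left (u v x : Fin n → ZMod 2) : dotp (u + v) x = dotp u x + dotp v x := by
  simp [dotp, add_mul, sum_add_distrib]

lemma dotp_add_right (u x y : Fin n → ZMod 2) : dotp u (x + y) = dotp u x + dotp u y := by
  simp [dotp, mul_add, sum_add_distrib]

lemma dotp_single_left (i : Fin n) (x : Fin n → ZMod 2) : dotp (Pi.single i 1) x = x i := by
  simp [dotp, Pi.single_apply]

lemma sum_sgn_dotp (t : Fin n → ZMod 2) :
    ∑ u, sgn (dotp u t) = if t = 0 then 2 ^ n else 0 := by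
  split_ifs with ht
  · simp [ht, dotp, sgn]
  obtain ⟨i, hi⟩ := Function.ne_iff.mp ht
  have hti : t i = 1 := (by decide : ∀ z : ZMod 2, z ≠ 0 → z = 1) _ hi
  have hflip := Equiv.sum_comp (Equiv.addLeft (Pi.single i 1)) (fun u => sgn (dotp u t))
  simp only [Equiv.coe_addLeft, dotp_add_left, dotp_single_left, hti, sgn_add, sgn_one,
    neg_one_mul, sum_neg_distrib] at hflip
  linarith

def walsh (g : (Fin n → ZMod 2) → ZMod 2) (u : Fin n → ZMod 2) : ℤ :=
  ∑ x, sgn (g x) * sgn (dotp u x)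

def IsBent (g : (Fin n → ZMod 2) → ZMod 2) : Prop := ∀ u, walsh g u ^ 2 = 2 ^ n

lemma sum_walsh_sq_mul_sgn (g : (Fin n → ZMod 2) → ZMod 2) (s : Fin n → ZMod 2) :
    ∑ u, walsh g u ^ 2 * sgn (dotp u s) = 2 ^ n * ∑ x, sgn (g x) * sgn (g (x + s)) := by
  have hexpand : ∀ u, walsh g u ^ 2 * sgn (dotp u s) =
      ∑ x, ∑ y, sgn (g x) * sgn (g y) * sgn (dotp u (x + y + s)) := by
    intro u
    rw [walsh, sq, sum_mul_sum, sum_mul]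
    refine sum_congr rfl fun x _ => ?_
    rw [sum_mul]
    refine sum_congr rfl fun y _ => ?_
    rw [dotp_add_right, dotp_add_right, sgn_add, sgn_add]
    ring
  have hzero : ∀ x y : Fin n → ZMod 2, x + y + s = 0 ↔ y = x + s := by
    intro x y
    rw [add_right_comm, add_eq_zero_iff_eq_neg, ZModModule.neg_eq_self, add_comm, eq_comm]
  calc ∑ u, walsh g u ^ 2 * sgn (dotp u s)
      = ∑ x, ∑ y, sgn (g x) * sgn (g y) * ∑ u, sgn (dotp u (x + y + s)) := by
        simp only [hexpand, mul_sum]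
        rw [sum_comm]
        exact sum_congr rfl fun x _ => sum_comm
    _ = 2 ^ n * ∑ x, sgn (g x) * sgn (g (x + s)) := by
        simp only [sum_sgn_dotp, hzero, mul_ite, mul_zero, sum_ite_eq', mem_univ, if_true,
          mul_sum]
        exact sum_congr rfl fun x _ => by ring

lemma IsBent.sum_sgn_mul_sgn_add {g : (Fin n → ZMod 2) → ZMod 2} (hg : IsBent g)
    {s : Fin n → ZMod 2} (hs : s ≠ 0) : ∑ x, sgn (g x) * sgn (g (x + s)) = 0 := by
  have h := sum_walsh_sq_mul_sgn g s
  simp only [hg _, ← mul_sum, sum_sgn_dotp, if_neg hs, mul_zero] at h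
  exact (mul_eq_zero.mp h.symm).resolve_left (by positivity)

lemma IsBent.four_mul_card_both_eq_one {g : (Fin n → ZMod 2) → ZMod 2} (hg : IsBent g)
    {u v : Fin n → ZMod 2} (huv : u ≠ v) :
    4 * (#{w | g (u + w) = 1 ∧ g (v + w) = 1} : ℤ) = 2 ^ n - 2 * ∑ w, sgn (g w) := by
  have hshift : ∀ z : Fin n → ZMod 2, ∑ w, sgn (g (z + w)) = ∑ w, sgn (g w) :=
    fun z => Equiv.sum_comp (Equiv.addLeft z) (fun w => sgn (g w))
  have hcross : ∑ w, sgn (g (u + w)) * sgn (g (v + w)) = 0 := by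
    rw [← hg.sum_sgn_mul_sgn_add (s := u + v)
      (by rwa [Ne, ← ZModModule.sub_eq_add, sub_eq_zero])]
    refine Fintype.sum_equiv (Equiv.addLeft u) _ _ fun w => ?_
    simp only [Equiv.coe_addLeft]
    rw [add_comm u w, ZModModule.add_add_add_cancel, add_comm w v]
  calc 4 * (#{w | g (u + w) = 1 ∧ g (v + w) = 1} : ℤ)
      = ∑ w, (1 - sgn (g (u + w))) * (1 - sgn (g (v + w))) := by
        rw [sum_congr rfl fun w _ => one_sub_sgn_mul_one_sub_sgn _ _, ← mul_sum, sum_boole]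
    _ = 2 ^ n - 2 * ∑ w, sgn (g w) := by
        simp only [sub_mul, one_mul, mul_sub, mul_one, sum_sub_distrib, hshift, hcross]
        simp only [sum_const, card_univ, Fintype.card_pi, ZMod.card, prod_const,
          Fintype.card_fin, Int.nsmul_eq_mul, Nat.cast_pow, Nat.cast_ofNat, mul_one, sub_zero]
        ring

lemma IsBent.natCard_both_eq_one_eq {g : (Fin n → ZMod 2) → ZMod 2} (hg : IsBent g)
    {u v x y : Fin n → ZMod 2} (huv : u ≠ v) (hxy : x ≠ y) :
    Nat.card {w | g (u + w) = 1 ∧ g (v + w) = 1} =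
      Nat.card {w | g (x + w) = 1 ∧ g (y + w) = 1} := by
  simp only [Nat.card_eq_fintype_card, Fintype.card_ofFinset, Set.mem_ofPred]
  have := (hg.four_mul_card_both_eq_one huv).trans (hg.four_mul_card_both_eq_one hxy).symm
  omega

end Walsh

section Digits

variable {k : ℕ}

/-- The paper's `ι`: the natural number with binary digits `e`. -/
def binVal (e : Fin k → ZMod 2) : ℕ := ∑ i, (e i).val * 2 ^ (i : ℕ)

def binEquiv : (Fin k → ZMod 2) ≃ Fin (2 ^ k) := finFunctionFinEquiv

lemma binEquiv_apply (e : Fin k → ZMod 2) : (binEquiv e : ℕ) = binVal e :=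
  finFunctionFinEquiv_apply e

lemma binVal_binEquiv_symm (t : Fin (2 ^ k)) : binVal (binEquiv.symm t) = t := by
  rw [← binEquiv_apply, Equiv.apply_symm_apply]

lemma binVal_lt (e : Fin k → ZMod 2) : binVal e < 2 ^ k :=
  binEquiv_apply e ▸ (binEquiv e).isLt

lemma binVal_injective : Function.Injective (binVal (k := k)) := fun e e' h =>
  binEquiv.injective (Fin.ext (by rw [binEquiv_apply, binEquiv_apply, h]))

lemma natCast_binVal_injective {e e' : Fin k → ZMod 2}
    (h : (binVal e : ZMod (2 ^ k)) = binVal e') : e = e' := by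
  rw [ZMod.natCast_eq_natCast_iff', Nat.mod_eq_of_lt (binVal_lt _),
    Nat.mod_eq_of_lt (binVal_lt _)] at h
  exact binVal_injective h

lemma binVal_add {e e' : Fin k → ZMod 2} (h : ∀ i, (e i).val + (e' i).val ≤ 1) :
    binVal (e + e') = binVal e + binVal e' := by
  have hadd : ∀ x y : ZMod 2, x.val + y.val ≤ 1 → (x + y).val = x.val + y.val := by decide
  simp only [binVal, ← sum_add_distrib, ← add_mul, Pi.add_apply, hadd _ _ (h _)]

lemma binVal_castSucc_add_last {j : ℕ} (e : Fin (j + 1) → ZMod 2) :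
    binVal e = binVal (fun i : Fin j => e i.castSucc) + (e (Fin.last j)).val * 2 ^ j := by
  simp [binVal, Fin.sum_univ_castSucc]

end Digits

lemma odd_sum_val_iff {ι : Type*} [Fintype ι] (x : ι → ZMod 2) :
    Odd (∑ i, (x i).val) ↔ ∑ i, x i = 1 := by
  rw [← ZMod.natCast_eq_one_iff_odd]
  push_cast [ZMod.natCast_val, ZMod.cast_id]
  rfl

lemma natCast_binVal_mem_Xc1_iff {j : ℕ} {c : Fin (j + 1) → ZMod 2} (hc : c (Fin.last j) = 1)
    (e : Fin (j + 1) → ZMod 2) :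
    (binVal e : ZMod (2 ^ (j + 1))) ∈ Xc1 (j + 1) c ↔ ∑ i, c i * e i = 1 := by
  constructor
  · rintro ⟨ct, dd, hct, hdd, hodd, he⟩
    have hdd' : ∀ i, (dd i).val ≤ 1 - (c i).val := by
      intro i
      rcases Fin.eq_castSucc_or_eq_last i with ⟨i, rfl⟩ | rfl
      · exact (hdd i.castSucc).1 (by simp)
      · rw [(hdd (Fin.last j)).2 (by simp)]
        exact Nat.zero_le _
    have hdisj : ∀ i, (ct i).val + (dd i).val ≤ 1 := fun i => by
      have := hct i; have := hdd' i; have := ZMod.val_lt (c i); omega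
    have hsplit : e = ct + dd := by
      refine natCast_binVal_injective ?_
      rwa [binVal_add hdisj]
    have hbit : ∀ x y z : ZMod 2, y.val ≤ x.val → z.val ≤ 1 - x.val → x * (y + z) = y := by
      decide
    rw [← odd_sum_val_iff]
    convert hodd using 3 with i
    rw [hsplit, Pi.add_apply, hbit _ _ _ (hct i) (hdd' i)]
  · intro h
    have hlow : ∀ x y : ZMod 2, (x * y).val ≤ x.val := by decide
    have hhigh : ∀ x y : ZMod 2, ((1 - x) * y).val ≤ 1 - x.val := by decide
    have hdisj : ∀ x y : ZMod 2, (x * y).val + ((1 - x) * y).val ≤ 1 := by decide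
    refine ⟨c * e, (1 - c) * e, fun i => hlow _ _, fun i => ⟨fun _ => hhigh _ _, fun hi => ?_⟩,
      (odd_sum_val_iff _).mpr h, ?_⟩
    · rw [show i = Fin.last j from Fin.ext (by simpa using hi)]
      simp [hc]
    · change (binVal e : ZMod (2 ^ (j + 1))) = (binVal (c * e) + binVal ((1 - c) * e) : ℕ)
      rw [← binVal_add (e := c * e) (e' := (1 - c) * e) fun i => hdisj _ _]
      congr 2
      ring

lemma exists_eq_zero_of_sum_sq_eq_one {ι : Type*} [Fintype ι] {x : ι → ℤ}
    (h : ∑ i, x i ^ 2 = 1) : ∃ i₀, x i₀ ^ 2 = 1 ∧ ∀ i ≠ i₀, x i = 0 := by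
  classical
  obtain ⟨i₀, hi₀⟩ : ∃ i, x i ≠ 0 := by
    by_contra! h0
    simp [h0] at h
  have hsplit := add_sum_erase univ (fun i => x i ^ 2) (mem_univ i₀)
  have hpos : 0 < x i₀ ^ 2 := by positivity
  have hrest := sum_nonneg fun i (_ : i ∈ univ.erase i₀) => sq_nonneg (x i)
  refine ⟨i₀, by omega, fun i hi => pow_eq_zero_iff two_ne_zero |>.mp ?_⟩
  exact (sum_eq_zero_iff_of_nonneg fun i _ => sq_nonneg (x i)).mp (by omega) i
    (mem_erase.mpr ⟨hi, mem_univ i⟩)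

section Cyclotomic

variable {j : ℕ} {ζ : ℂ}

local notation "ℤ[ζ]" => Algebra.adjoin ℤ (singleton ζ : Set ℂ)

def ofCoeffs (ζ : ℂ) (b : Fin (2 ^ j) → ℤ) : ℂ := ∑ t, (b t : ℂ) * ζ ^ (t : ℕ)

lemma IsPrimitiveRoot.pow_two_pow_eq_neg_one (hζ : IsPrimitiveRoot ζ (2 ^ (j + 1))) :
    ζ ^ 2 ^ j = -1 := by
  refine IsPrimitiveRoot.eq_neg_one_of_two_right ?_
  have := hζ.pow_of_dvd (p := 2 ^ j) (by positivity) (pow_dvd_pow 2 j.le_succ)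
  rwa [pow_succ, Nat.mul_div_cancel_left _ (by positivity)] at this

lemma IsPrimitiveRoot.conj_eq_pow (hζ : IsPrimitiveRoot ζ (2 ^ (j + 1))) :
    conj ζ = ζ ^ (2 ^ (j + 1) - 1) := by
  rw [← Complex.inv_eq_conj (Complex.norm_eq_one_of_pow_eq_one hζ.pow_eq_one (by positivity)),
    inv_eq_of_mul_eq_one_right]
  rw [← pow_succ', Nat.sub_add_cancel Nat.one_le_two_pow, hζ.pow_eq_one]

lemma IsPrimitiveRoot.pow_mul_conj_pow_self (hζ : IsPrimitiveRoot ζ (2 ^ (j + 1))) (r : ℕ) :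
    ζ ^ r * conj (ζ ^ r) = 1 := by
  rw [Complex.mul_conj, Complex.normSq_eq_norm_sq, norm_pow,
    Complex.norm_eq_one_of_pow_eq_one hζ.pow_eq_one (by positivity)]
  simp

lemma IsPrimitiveRoot.linearIndependent_pow_fin (hζ : IsPrimitiveRoot ζ (2 ^ (j + 1))) :
    LinearIndependent ℚ (fun t : Fin (2 ^ j) => ζ ^ (t : ℕ)) := by
  have hdeg : (minpoly ℚ ζ).natDegree = 2 ^ j := by
    rw [← cyclotomic_eq_minpoly_rat hζ (by positivity), natDegree_cyclotomic,
      Nat.totient_prime_pow_succ Nat.prime_two]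
    simp
  have h := linearIndependent_pow (K := ℚ) ζ
  rw [hdeg] at h
  exact h

lemma IsPrimitiveRoot.ofCoeffs_injective (hζ : IsPrimitiveRoot ζ (2 ^ (j + 1))) :
    Function.Injective (ofCoeffs (j := j) ζ) := by
  intro b b' h
  have h0 : ∑ t, ((b t - b' t : ℤ) : ℚ) • ζ ^ (t : ℕ) = 0 := by
    simp only [ofCoeffs] at h
    simp [Rat.smul_def, sub_mul, sum_sub_distrib, h]
  funext t
  have := Fintype.linearIndependent_iff.mp hζ.linearIndependent_pow_fin _ h0 t
  exact sub_eq_zero.mp (by exact_mod_cast this)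

lemma IsPrimitiveRoot.pow_mul_conj_pow_mem_span (hζ : IsPrimitiveRoot ζ (2 ^ (j + 1)))
    {s t : Fin (2 ^ j)} (hst : s ≠ t) :
    ζ ^ (s : ℕ) * conj (ζ ^ (t : ℕ)) ∈
      Submodule.span ℚ ((fun r : Fin (2 ^ j) => ζ ^ (r : ℕ)) '' {0}ᶜ) := by
  rcases lt_or_gt_of_ne (Fin.val_ne_of_ne hst) with h | h
  · have hs : ζ ^ (s : ℕ) = -(ζ ^ (2 ^ j + s - t : ℕ) * ζ ^ (t : ℕ)) := by
      rw [← pow_add, show 2 ^ j + (s : ℕ) - t + t = 2 ^ j + s by omega, pow_add,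
        hζ.pow_two_pow_eq_neg_one]
      ring
    rw [hs, neg_mul, mul_assoc, hζ.pow_mul_conj_pow_self, mul_one]
    refine Submodule.neg_mem _ (Submodule.subset_span ⟨⟨2 ^ j + s - t, by omega⟩, ?_, rfl⟩)
    simp only [Set.mem_compl_iff, Set.mem_singleton_iff, Fin.ext_iff, Fin.val_zero]
    omega
  · have hs : ζ ^ (s : ℕ) = ζ ^ (s - t : ℕ) * ζ ^ (t : ℕ) := by
      rw [← pow_add, Nat.sub_add_cancel h.le]
    rw [hs, mul_assoc, hζ.pow_mul_conj_pow_self, mul_one]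
    refine Submodule.subset_span ⟨⟨s - t, by omega⟩, ?_, rfl⟩
    simp only [Set.mem_compl_iff, Set.mem_singleton_iff, Fin.ext_iff, Fin.val_zero]
    omega

/-- Off the diagonal, `ζ^s · conj ζ^t = ±ζ^r` with `0 < r < 2^j`, so the constant coefficient
of `α · conj α` is `∑ b_t²`. -/
lemma IsPrimitiveRoot.sum_sq_eq_of_ofCoeffs_mul_conj (hζ : IsPrimitiveRoot ζ (2 ^ (j + 1)))
    (b : Fin (2 ^ j) → ℤ) {M : ℤ} (h : ofCoeffs ζ b * conj (ofCoeffs ζ b) = M) :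
    ∑ t, b t ^ 2 = M := by
  set S := Submodule.span ℚ ((fun r : Fin (2 ^ j) => ζ ^ (r : ℕ)) '' {0}ᶜ)
  have hmem : ((M - ∑ t, b t ^ 2 : ℤ) : ℚ) • ζ ^ ((0 : Fin (2 ^ j)) : ℕ) ∈ S := by
    have hexp : ((M - ∑ t, b t ^ 2 : ℤ) : ℚ) • ζ ^ ((0 : Fin (2 ^ j)) : ℕ) =
        ∑ s, ∑ t, ((b s * b t : ℤ) : ℚ) •
          (ζ ^ (s : ℕ) * conj (ζ ^ (t : ℕ)) - if s = t then 1 else 0) := by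
      rw [Fin.val_zero, pow_zero, Rat.smul_def, mul_one]
      push_cast
      rw [← h]
      simp only [ofCoeffs, map_sum, sum_mul_sum, Rat.smul_def, mul_sub, sum_sub_distrib, mul_ite,
        mul_one, mul_zero, sum_ite_eq, mem_univ, if_true]
      push_cast
      congr 1
      · refine sum_congr rfl fun s _ => sum_congr rfl fun t _ => ?_
        rw [map_mul, map_intCast]
        ring
      · simp [sq]
    rw [hexp]
    refine Submodule.sum_mem _ fun s _ => Submodule.sum_mem _ fun t _ =>
      Submodule.smul_mem _ _ ?_
    split_ifs with hst
    · rw [hst, hζ.pow_mul_conj_pow_self, sub_self]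
      exact S.zero_mem
    · simpa using hζ.pow_mul_conj_pow_mem_span hst
  by_contra hne
  refine hζ.linearIndependent_pow_fin.notMem_span_image (s := {0}ᶜ) (x := 0) (by simp) ?_
  refine (S.smul_mem_iff ?_).mp hmem
  exact_mod_cast sub_ne_zero.mpr (Ne.symm hne)

lemma ofCoeffs_mem_adjoin (b : Fin (2 ^ j) → ℤ) : ofCoeffs ζ b ∈ ℤ[ζ] :=
  Subalgebra.sum_mem _ fun _ _ => Subalgebra.mul_mem _ (Subalgebra.intCast_mem _ _)
    (Subalgebra.pow_mem _ (Algebra.self_mem_adjoin_singleton ℤ ζ) _)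

lemma IsPrimitiveRoot.exists_ofCoeffs_eq (hζ : IsPrimitiveRoot ζ (2 ^ (j + 1))) {x : ℂ}
    (hx : x ∈ ℤ[ζ]) : ∃ b : Fin (2 ^ j) → ℤ, ofCoeffs ζ b = x := by
  rw [Algebra.adjoin_singleton_eq_range_aeval] at hx
  obtain ⟨p, rfl⟩ := hx
  set P : ℤ[X] := X ^ 2 ^ j + C 1
  have hP : P.Monic := monic_X_pow_add_C 1 (by positivity)
  have hPdeg : P.natDegree = 2 ^ j := natDegree_X_pow_add_C
  have hdeg : (p %ₘ P).natDegree < 2 ^ j := hPdeg ▸ natDegree_modByMonic_lt p hP fun h => by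
    simp only [h, natDegree_one] at hPdeg
    exact absurd hPdeg (by positivity)
  have hred : aeval ζ p = aeval ζ (p %ₘ P) := by
    conv_lhs => rw [← modByMonic_add_div p P]
    simp [P, hζ.pow_two_pow_eq_neg_one]
  refine ⟨fun t => (p %ₘ P).coeff t, ?_⟩
  change _ = aeval ζ p
  rw [hred, aeval_eq_sum_range' hdeg, ofCoeffs, ← Fin.sum_univ_eq_sum_range]
  simp [zsmul_eq_mul]

def zetaInt (ζ : ℂ) : Algebra.adjoin ℤ {ζ} := ⟨ζ, Algebra.self_mem_adjoin_singleton ℤ ζ⟩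

lemma IsPrimitiveRoot.zetaInt_isPrimitiveRoot (hζ : IsPrimitiveRoot ζ (2 ^ (j + 1))) :
    IsPrimitiveRoot (zetaInt ζ) (2 ^ (j + 1)) :=
  IsPrimitiveRoot.coe_submonoidClass_iff.mp hζ

lemma IsPrimitiveRoot.associated_zetaInt_sub_one_pow_two
    (hζ : IsPrimitiveRoot ζ (2 ^ (j + 1))) : Associated ((zetaInt ζ - 1) ^ 2 ^ j) 2 := by
  have hζ' := hζ.zetaInt_isPrimitiveRoot
  have htwo : (2 : ℤ[ζ]) = ∏ μ ∈ primitiveRoots (2 ^ (j + 1)) ℤ[ζ], (1 - μ) := by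
    have := eval_one_cyclotomic_prime_pow (R := ℤ[ζ]) (p := 2) j
    rw [cyclotomic_eq_prod_X_sub_primitiveRoots hζ', eval_prod] at this
    simpa using this.symm
  have hcard : (primitiveRoots (2 ^ (j + 1)) ℤ[ζ]).card = 2 ^ j := by
    rw [hζ'.card_primitiveRoots, Nat.totient_prime_pow_succ Nat.prime_two]
    simp
  rw [htwo, ← hcard, ← prod_const]
  refine Associated.prod _ _ _ fun μ hμ => ?_
  rw [mem_primitiveRoots (by positivity)] at hμ
  obtain ⟨i, -, rfl⟩ := hζ'.eq_pow_of_pow_eq_one hμ.pow_eq_one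
  have hi := (hζ'.pow_iff_coprime (by positivity) i).mp hμ
  simpa using (hζ'.associated_sub_one_pow_sub_one_of_coprime hi).neg_right

/-- `1/2` is not an algebraic integer. -/
lemma IsPrimitiveRoot.not_isUnit_two_adjoin (hζ : IsPrimitiveRoot ζ (2 ^ (j + 1))) :
    ¬ IsUnit (2 : ℤ[ζ]) := by
  rintro ⟨u, hu⟩
  have hint : IsIntegral ℤ (((u⁻¹ : ℤ[ζ]ˣ) : ℤ[ζ]) : ℂ) :=
    adjoin_le_integralClosure (hζ.isIntegral (by positivity)) (Subtype.prop _)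
  have hhalf : (((u⁻¹ : ℤ[ζ]ˣ) : ℤ[ζ]) : ℂ) = algebraMap ℚ ℂ (1 / 2) := by
    have h2 : ((2 : ℤ[ζ]) : ℂ) = 2 := rfl
    have := congr_arg Subtype.val u.mul_inv
    rw [Subalgebra.coe_mul, hu, h2, OneMemClass.coe_one] at this
    norm_num
    linear_combination this / 2
  rw [hhalf, isIntegral_algebraMap_iff (algebraMap ℚ ℂ).injective,
    IsIntegrallyClosed.isIntegral_iff] at hint
  obtain ⟨z, hz⟩ := hint
  rw [algebraMap_int_eq, eq_intCast] at hz
  have : (2 * z : ℚ) = 1 := by rw [hz]; norm_num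
  norm_cast at this
  omega

lemma zetaInt_sub_one_dvd_sub_intCast (x : ℤ[ζ]) : ∃ z : ℤ, zetaInt ζ - 1 ∣ x - z := by
  obtain ⟨x, hx⟩ := x
  induction hx using Algebra.adjoin_induction with
  | mem x hx =>
    obtain rfl := Set.mem_singleton_iff.mp hx
    exact ⟨1, by rw [Int.cast_one]; rfl⟩
  | algebraMap r =>
    refine ⟨r, ?_⟩
    rw [show (⟨algebraMap ℤ ℂ r, _⟩ : ℤ[ζ]) = r from rfl, sub_self]
    exact dvd_zero _
  | add x y hx hy ihx ihy =>
    obtain ⟨a, ha⟩ := ihx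
    obtain ⟨b, hb⟩ := ihy
    refine ⟨a + b, ?_⟩
    convert dvd_add ha hb using 1
    ext
    push_cast
    ring
  | mul x y hx hy ihx ihy =>
    obtain ⟨a, ha⟩ := ihx
    obtain ⟨b, hb⟩ := ihy
    refine ⟨a * b, ?_⟩
    convert dvd_add (dvd_mul_of_dvd_left ha ⟨y, hy⟩) (dvd_mul_of_dvd_right hb (a : ℤ[ζ])) using 1
    ext
    push_cast
    ring

lemma IsPrimitiveRoot.zetaInt_sub_one_dvd_or_dvd_sub_one (hζ : IsPrimitiveRoot ζ (2 ^ (j + 1)))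
    (x : ℤ[ζ]) : zetaInt ζ - 1 ∣ x ∨ zetaInt ζ - 1 ∣ x - 1 := by
  have hdvd2 : zetaInt ζ - 1 ∣ 2 :=
    (dvd_pow_self _ (by positivity)).trans hζ.associated_zetaInt_sub_one_pow_two.dvd
  obtain ⟨z, hz⟩ := zetaInt_sub_one_dvd_sub_intCast x
  have hx : zetaInt ζ - 1 ∣ x - (z % 2 : ℤ) := by
    have hdiv : (z : ℤ[ζ]) = (z % 2 : ℤ) + 2 * (z / 2 : ℤ) := by
      exact_mod_cast (Int.emod_add_mul_ediv z 2).symm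
    convert dvd_add hz (dvd_mul_of_dvd_left hdvd2 ((z / 2 : ℤ) : ℤ[ζ])) using 1
    rw [hdiv]
    ring
  rcases Int.emod_two_eq_zero_or_one z with h | h
  · exact .inl (by simpa [h] using hx)
  · exact .inr (by simpa [h] using hx)

lemma IsPrimitiveRoot.prime_zetaInt_sub_one (hζ : IsPrimitiveRoot ζ (2 ^ (j + 1))) :
    Prime (zetaInt ζ - 1) := by
  have h2 := hζ.associated_zetaInt_sub_one_pow_two
  have hnu : ¬ IsUnit (zetaInt ζ - 1) := fun hu =>
    hζ.not_isUnit_two_adjoin (h2.isUnit (hu.pow _))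
  refine ⟨fun h0 => ?_, hnu, fun x y hxy => ?_⟩
  · rw [h0, zero_pow (by positivity)] at h2
    exact two_ne_zero (associated_zero_iff_eq_zero _ |>.mp h2.symm)
  · by_contra! hcon
    have hx := (hζ.zetaInt_sub_one_dvd_or_dvd_sub_one x).resolve_left hcon.1
    have hy := (hζ.zetaInt_sub_one_dvd_or_dvd_sub_one y).resolve_left hcon.2
    refine hnu (isUnit_of_dvd_one ?_)
    convert dvd_sub (dvd_sub hxy (dvd_mul_of_dvd_left hx y)) hy using 1
    ring

lemma IsPrimitiveRoot.conj_mem_adjoin (hζ : IsPrimitiveRoot ζ (2 ^ (j + 1))) {x : ℂ}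
    (hx : x ∈ ℤ[ζ]) : conj x ∈ ℤ[ζ] := by
  have hle : ℤ[ζ] ≤ ℤ[ζ].comap (starRingEnd ℂ).toIntAlgHom := by
    rw [Algebra.adjoin_le_iff, Set.singleton_subset_iff]
    change conj ζ ∈ ℤ[ζ]
    rw [hζ.conj_eq_pow]
    exact Subalgebra.pow_mem _ (Algebra.self_mem_adjoin_singleton ℤ ζ) _
  exact hle hx

def IsPrimitiveRoot.conjAdjoin (hζ : IsPrimitiveRoot ζ (2 ^ (j + 1))) : ℤ[ζ] →+* ℤ[ζ] :=
  (starRingEnd ℂ).restrict _ _ fun _ => hζ.conj_mem_adjoin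

lemma IsPrimitiveRoot.coe_conjAdjoin (hζ : IsPrimitiveRoot ζ (2 ^ (j + 1))) (x : ℤ[ζ]) :
    (hζ.conjAdjoin x : ℂ) = conj (x : ℂ) := rfl

lemma IsPrimitiveRoot.associated_conjAdjoin_zetaInt_sub_one
    (hζ : IsPrimitiveRoot ζ (2 ^ (j + 1))) :
    Associated (hζ.conjAdjoin (zetaInt ζ - 1)) (zetaInt ζ - 1) := by
  have hconj : hζ.conjAdjoin (zetaInt ζ) = zetaInt ζ ^ (2 ^ (j + 1) - 1) :=
    Subtype.ext (by simp [hζ.coe_conjAdjoin, zetaInt, hζ.conj_eq_pow])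
  rw [map_sub, map_one, hconj]
  refine (hζ.zetaInt_isPrimitiveRoot.associated_sub_one_pow_sub_one_of_coprime ?_).symm
  exact (Nat.coprime_self_sub_left Nat.one_le_two_pow).mpr (Nat.coprime_one_left _)

/-- `α · conj α` is associated to a power of the prime `ζ - 1`, and conjugation preserves the
exponent of `ζ - 1`, so `α` carries exactly half of it. -/
lemma IsPrimitiveRoot.associated_two_pow_of_mul_conjAdjoin
    (hζ : IsPrimitiveRoot ζ (2 ^ (j + 1))) {α : ℤ[ζ]} {N : ℕ}
    (h : α * hζ.conjAdjoin α = 4 ^ N) : Associated α (2 ^ N) := by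
  have hl := hζ.prime_zetaInt_sub_one
  have h2 := hζ.associated_zetaInt_sub_one_pow_two
  have h4 : Associated ((zetaInt ζ - 1) ^ (2 ^ j * (2 * N))) (α * hζ.conjAdjoin α) := by
    rw [h, pow_mul, show (4 : ℤ[ζ]) ^ N = 2 ^ (2 * N) by rw [pow_mul]; norm_num]
    exact h2.pow_pow
  obtain ⟨a, -, ha⟩ := (dvd_prime_pow hl _).mp ((dvd_mul_right α _).trans h4.symm.dvd)
  have hconj : Associated (hζ.conjAdjoin α) ((zetaInt ζ - 1) ^ a) := by
    have := ha.map hζ.conjAdjoin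
    rw [map_pow] at this
    exact this.trans hζ.associated_conjAdjoin_zetaInt_sub_one.pow_pow
  have hsq : Associated ((zetaInt ζ - 1) ^ (2 ^ j * (2 * N))) ((zetaInt ζ - 1) ^ (a + a)) :=
    pow_add (zetaInt ζ - 1) a a ▸ h4.trans (ha.mul_mul hconj)
  have hexp : a + a = 2 ^ j * (2 * N) := le_antisymm
    ((pow_dvd_pow_iff hl.ne_zero hl.not_isUnit).mp hsq.symm.dvd)
    ((pow_dvd_pow_iff hl.ne_zero hl.not_isUnit).mp hsq.dvd)
  rw [show a = 2 ^ j * N by linarith, pow_mul] at ha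
  exact ha.trans h2.pow_pow

lemma IsPrimitiveRoot.exists_eq_two_pow_mul_of_mul_conj (hζ : IsPrimitiveRoot ζ (2 ^ (j + 1)))
    {α : ℂ} (hα : α ∈ ℤ[ζ]) {N : ℕ} (h : α * conj α = 4 ^ N) :
    ∃ β ∈ ℤ[ζ], α = 2 ^ N * β ∧ β * conj β = 1 := by
  obtain ⟨u, hu⟩ := hζ.associated_two_pow_of_mul_conjAdjoin (α := ⟨α, hα⟩) (N := N)
    (Subtype.ext (by rw [Subalgebra.coe_mul, hζ.coe_conjAdjoin]; exact h))
  have hαu : α = 2 ^ N * (((u⁻¹ : ℤ[ζ]ˣ) : ℤ[ζ]) : ℂ) := by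
    have h2 : ((2 : ℤ[ζ]) : ℂ) = 2 := rfl
    simpa [h2] using congr_arg Subtype.val ((Units.eq_mul_inv_iff_mul_eq u).mpr hu)
  refine ⟨_, Subtype.prop _, hαu, ?_⟩
  rw [hαu, map_mul, map_pow, mul_mul_mul_comm, ← mul_pow, map_ofNat] at h
  refine (mul_right_inj' (pow_ne_zero N (mul_ne_zero two_ne_zero two_ne_zero))).mp ?_
  rw [h, mul_one]
  norm_num

theorem IsPrimitiveRoot.exists_eq_zero_of_ofCoeffs_mul_conj
    (hζ : IsPrimitiveRoot ζ (2 ^ (j + 1))) (b : Fin (2 ^ j) → ℤ) {N : ℕ}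
    (h : ofCoeffs ζ b * conj (ofCoeffs ζ b) = 4 ^ N) :
    ∃ t₀, b t₀ ^ 2 = 4 ^ N ∧ ∀ t ≠ t₀, b t = 0 := by
  obtain ⟨β, hβ, hαβ, hβ1⟩ := hζ.exists_eq_two_pow_mul_of_mul_conj (ofCoeffs_mem_adjoin b) h
  obtain ⟨b', rfl⟩ := hζ.exists_ofCoeffs_eq hβ
  have hb : b = fun t => 2 ^ N * b' t := hζ.ofCoeffs_injective <| by
    rw [hαβ]
    simp [ofCoeffs, mul_sum, mul_assoc]
  obtain ⟨t₀, ht₀, hzero⟩ := exists_eq_zero_of_sum_sq_eq_one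
    (hζ.sum_sq_eq_of_ofCoeffs_mul_conj b' (M := 1) (by simpa using hβ1))
  refine ⟨t₀, ?_, fun t ht => ?_⟩
  · rw [hb, mul_pow, ht₀, mul_one, ← pow_mul, mul_comm, pow_mul]
    norm_num
  · simp [hb, hzero t ht]

end Cyclotomic

lemma sum_mul_comp_eq_sum_fiber {ι κ R : Type*} [Fintype ι] [Fintype κ] [DecidableEq κ]
    [CommSemiring R] (g : ι → κ) (w : ι → R) (F : κ → R) :
    ∑ i, w i * F (g i) = ∑ k, (∑ i with g i = k, w i) * F k := by
  rw [← sum_fiberwise univ g]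
  refine sum_congr rfl fun k _ => ?_
  rw [sum_mul]
  exact sum_congr rfl fun i hi => by rw [(mem_filter.mp hi).2]

section GBent

variable {n j : ℕ}

def lowDigits (a : Fin (j + 1) → (Fin n → ZMod 2) → ZMod 2) (x : Fin n → ZMod 2) :
    Fin j → ZMod 2 :=
  fun i => a i.castSucc x

def fiberWalsh (a : Fin (j + 1) → (Fin n → ZMod 2) → ZMod 2) (u : Fin n → ZMod 2)
    (e : Fin j → ZMod 2) : ℤ :=
  ∑ x with lowDigits a x = e, sgn (a (Fin.last j) x) * sgn (dotp u x)

lemma WHT_eq_sum_fiberWalsh {f : (Fin n → ZMod 2) → ZMod (2 ^ (j + 1))}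
    {a : Fin (j + 1) → (Fin n → ZMod 2) → ZMod 2} (hf : ∀ x, (f x).val = binVal fun i => a i x)
    (u : Fin n → ZMod 2) :
    WHT f u = ∑ e, (fiberWalsh a u e : ℂ) * zeta (2 ^ (j + 1)) ^ binVal e := by
  have hζ : IsPrimitiveRoot (zeta (2 ^ (j + 1))) (2 ^ (j + 1)) :=
    Complex.isPrimitiveRoot_exp _ (by positivity)
  have hterm : ∀ x, zeta (2 ^ (j + 1)) ^ (f x).val * chr u x =
      ((sgn (a (Fin.last j) x) * sgn (dotp u x) : ℤ) : ℂ) *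
        zeta (2 ^ (j + 1)) ^ binVal (lowDigits a x) := by
    intro x
    rw [hf, binVal_castSucc_add_last, pow_add, pow_mul', hζ.pow_two_pow_eq_neg_one]
    rw [show (binVal fun i : Fin j => a i.castSucc x) = binVal (lowDigits a x) from rfl]
    simp only [chr, sgn]
    push_cast
    ring
  simp only [WHT, hterm]
  rw [sum_mul_comp_eq_sum_fiber (lowDigits a) _ fun e => zeta (2 ^ (j + 1)) ^ binVal e]
  push_cast [fiberWalsh]
  rfl

lemma walsh_eq_sum_fiberWalsh (a : Fin (j + 1) → (Fin n → ZMod 2) → ZMod 2)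
    {c : Fin (j + 1) → ZMod 2} (hc : c (Fin.last j) = 1) (u : Fin n → ZMod 2) :
    walsh (fun x => ∑ i, c i * a i x) u =
      ∑ e, fiberWalsh a u e * sgn (∑ i : Fin j, c i.castSucc * e i) := by
  have hterm : ∀ x, sgn (∑ i, c i * a i x) * sgn (dotp u x) =
      sgn (a (Fin.last j) x) * sgn (dotp u x) *
        sgn (∑ i : Fin j, c i.castSucc * lowDigits a x i) := by
    intro x
    rw [Fin.sum_univ_castSucc, hc, one_mul, sgn_add]
    simp only [lowDigits]
    ring
  simp only [walsh, hterm]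
  exact sum_mul_comp_eq_sum_fiber (lowDigits a) _ fun e => sgn (∑ i : Fin j, c i.castSucc * e i)

theorem isBent_of_gbent (hn : Even n) {f : (Fin n → ZMod 2) → ZMod (2 ^ (j + 1))}
    {a : Fin (j + 1) → (Fin n → ZMod 2) → ZMod 2} (hf : ∀ x, (f x).val = binVal fun i => a i x)
    (hgbent : ∀ u, ‖WHT f u‖ = Real.sqrt (2 ^ n)) {c : Fin (j + 1) → ZMod 2}
    (hc : c (Fin.last j) = 1) : IsBent fun x => ∑ i, c i * a i x := by
  intro u
  obtain ⟨N, rfl⟩ := hn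
  have hζ : IsPrimitiveRoot (zeta (2 ^ (j + 1))) (2 ^ (j + 1)) :=
    Complex.isPrimitiveRoot_exp _ (by positivity)
  set b : Fin (2 ^ j) → ℤ := fun t => fiberWalsh a u (binEquiv.symm t)
  have hWHT : WHT f u = ofCoeffs (zeta (2 ^ (j + 1))) b := by
    rw [WHT_eq_sum_fiberWalsh hf, ← binEquiv.symm.sum_comp]
    simp only [ofCoeffs, b, binVal_binEquiv_symm]
  have hnorm : ofCoeffs (zeta (2 ^ (j + 1))) b * conj (ofCoeffs (zeta (2 ^ (j + 1))) b) =
      4 ^ N := by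
    rw [← hWHT, Complex.mul_conj, Complex.normSq_eq_norm_sq, hgbent,
      Real.sq_sqrt (by positivity), ← two_mul, pow_mul]
    norm_num
  obtain ⟨t₀, ht₀, hzero⟩ := hζ.exists_eq_zero_of_ofCoeffs_mul_conj b hnorm
  rw [walsh_eq_sum_fiberWalsh a hc, ← binEquiv.symm.sum_comp,
    sum_eq_single t₀ (fun t _ ht => by rw [show fiberWalsh a u _ = 0 from hzero t ht, zero_mul])
      (by simp), mul_pow, sgn_sq, mul_one]
  change b t₀ ^ 2 = _
  rw [ht₀, ← two_mul, pow_mul]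
  norm_num

end GBent

/-- If `f = Σ 2^i a_i : V_n → Z_{2^k}` (`n` even, `k ≥ 2`) is gbent, then for every
`c ∈ F_2^{k-1}` (represented by a `c : Fin k → F_2` with last coordinate `1`) the quantity
`|N_{X_c^1}(u,v)|` is the same for all pairs of distinct vertices. -/
theorem gbent_NXc1_constant (n k : ℕ) (hn : Even n) (hk : 2 ≤ k)
    (f : (Fin n → ZMod 2) → ZMod (2 ^ k))
    (a : Fin k → (Fin n → ZMod 2) → ZMod 2)
    (hf : ∀ x, (f x).val = ∑ i : Fin k, (a i x).val * 2 ^ (i : ℕ))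
    (hgbent : ∀ u : Fin n → ZMod 2,
      ‖∑ x, zeta (2 ^ k) ^ (f x).val * chr u x‖ = Real.sqrt (2 ^ n)) :
    ∀ c : Fin k → ZMod 2, c ⟨k - 1, by omega⟩ = 1 →
      ∀ u v x y : Fin n → ZMod 2, u ≠ v → x ≠ y →
        Nat.card {w : Fin n → ZMod 2 | f (u + w) ∈ Xc1 k c ∧ f (v + w) ∈ Xc1 k c} =
          Nat.card {w : Fin n → ZMod 2 | f (x + w) ∈ Xc1 k c ∧ f (y + w) ∈ Xc1 k c} := by
  intro c hc u v x y huv hxy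
  obtain ⟨j, rfl⟩ : ∃ j, k = j + 1 := ⟨k - 1, by omega⟩
  have hmem : ∀ z, f z ∈ Xc1 (j + 1) c ↔ ∑ i, c i * a i z = 1 := fun z => by
    have hfz : ((binVal fun i => a i z : ℕ) : ZMod (2 ^ (j + 1))) = f z := by
      rw [binVal, ← hf z, ZMod.natCast_zmod_val]
    rw [← hfz]
    exact natCast_binVal_mem_Xc1_iff hc _
  simp only [hmem]
  exact (isBent_of_gbent hn hf hgbent hc).natCard_both_eq_one_eq huv hxy
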